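/- Let $\sigma^2\ge0$, let $w:\mathbb{R}\to\mathbb{R}$ be an even bounded $C^1$ function, let $b:\mathbb{R}\to\mathbb{R}$ be an odd bounded $C^1$ function, and let $c_0:\mathbb{R}\to\mathbb{R}$ be a bounded $C^1$ function. Let $f:\mathbb{R}^2\times[0,T]\to[0,\infty)$ be continuously differentiable in all variables, twice continuously differentiable in $(\rho,R)$, and suppose there is a compact set $K\subset\mathbb{R}^2$ with $\operatorname{supp} f(\cdot,\cdot,t)\subseteq K$ for all $t\in[0,T]$. Define $a[f](\rho,R,t)=\int_{\mathbb{R}^2}w(R-R')\big(b(\rho-\rho')-b(R-R')\big)f(\rho',R',t)\,d\rho'\,dR'$, $c[f](\rho,R,t)=\int_{\mathbb{R}^2}w(R-R')\,c_0(\rho'-\rho)\,f(\rho',R',t)\,d\rho'\,dR'$ and $d[f](R,t)=\int_{\mathbb{R}^2}w(R-R')f(\rho',R',t)\,d\rho'\,dR'$, and assume $f$ satisfies pointwise on $\mathbb{R}^2\times(0,T)$ the Fokker-Planck equation $\partial_t f = -\partial_R(a[f]f) - \partial_\rho(c[f]f) + \tfrac{\sigma^2}{2}\,d[f]\,\partial^2_\rho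 f$. Then $t\mapsto \int_{\mathbb{R}^2} R\, f(\rho,R,t)\,d\rho\,dR$ is constant on $[0,T]$. -/

import Mathlib

/-!
Let `m(t) = ∫ R f(ρ, R, t) dρ dR`. At an interior time, differentiate under the integral and insert
the equation: the strength-drift and diffusion terms are `ρ`-derivatives and integrate to zero along
every line `R = const`, while integrating the rating flux by parts in `R` leaves `∫ a[f] f`, which
vanishes because its kernel `w(R - R')(b(ρ - ρ') - b(R - R'))` is antisymmetric under exchange of
the two players. As `f(·, ·, t)` is supported in the fixed compact `K`, on `[0, T]` the moment `m`
is the integral over `K`, which is differentiable at every time; so `m` is continuous up to the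
endpoints and the mean value theorem makes it constant.
-/

open MeasureTheory Set Filter Topology Function

theorem integral_deriv_eq_zero_of_hasCompactSupport {E : Type*} [NormedAddCommGroup E]
    [NormedSpace ℝ E] {u u' : ℝ → E}
    (hu : ∀ x, HasDerivAt u (u' x) x) (hu' : Continuous u') (hc : HasCompactSupport u) :
    ∫ x, u' x = 0 := by
  have hu'c : HasCompactSupport u' := by
    simpa only [funext fun x => (hu x).deriv] using hc.deriv
  have huc : Continuous u := continuous_iff_continuousAt.2 fun x => (hu x).continuousAt
  exact integral_eq_zero_of_hasDerivAt_of_integrable hu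
    (hu'.integrable_of_hasCompactSupport hu'c) (huc.integrable_of_hasCompactSupport hc)

theorem integral_id_mul_deriv_of_hasCompactSupport {u u' : ℝ → ℝ}
    (hu : ∀ x, HasDerivAt u (u' x) x) (hu' : Continuous u') (hc : HasCompactSupport u) :
    ∫ x, x * u' x = -∫ x, u x := by
  have hu'c : HasCompactSupport u' := by
    simpa only [funext fun x => (hu x).deriv] using hc.deriv
  have huc : Continuous u := continuous_iff_continuousAt.2 fun x => (hu x).continuousAt
  simpa using integral_mul_deriv_eq_deriv_mul_of_integrable (u := id) (u' := fun _ => 1)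
    (fun x _ => hasDerivAt_id x) (fun x _ => hu x)
    ((continuous_id.mul hu').integrable_of_hasCompactSupport hu'c.mul_left)
    ((continuous_const.mul huc).integrable_of_hasCompactSupport hc.mul_left)
    ((continuous_id.mul huc).integrable_of_hasCompactSupport hc.mul_left)

theorem HasCompactSupport.comp_prodMk_left {α β M : Type*} [TopologicalSpace α]
    [TopologicalSpace β] [R1Space β] [Zero M] {u : α × β → M} (hu : HasCompactSupport u) (x : α) :
    HasCompactSupport fun r => u (x, r) :=
  HasCompactSupport.intro (hu.isCompact.image continuous_snd) fun r hr =>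
    image_eq_zero_of_notMem_tsupport fun h => hr ⟨(x, r), h, rfl⟩

theorem HasCompactSupport.comp_prodMk_right {α β M : Type*} [TopologicalSpace α] [R1Space α]
    [TopologicalSpace β] [Zero M] {u : α × β → M} (hu : HasCompactSupport u) (y : β) :
    HasCompactSupport fun p => u (p, y) :=
  HasCompactSupport.intro (hu.isCompact.image continuous_fst) fun p hp =>
    image_eq_zero_of_notMem_tsupport fun h => hp ⟨(p, y), h, rfl⟩

section Partial

variable {E F : Type*} [NormedAddCommGroup F] [NormedSpace ℝ F]

noncomputable def partialFst (u : ℝ × E → F) (x : ℝ × E) : F := deriv (fun p => u (p, x.2)) x.1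

noncomputable def partialSnd (u : E × ℝ → F) (x : E × ℝ) : F := deriv (fun r => u (x.1, r)) x.2

section Support

variable [TopologicalSpace E]

theorem partialFst_eq_zero_of_notMem_tsupport {u : ℝ × E → F} {x : ℝ × E}
    (hx : x ∉ tsupport u) : partialFst u x = 0 := by
  have h : (fun p => u (p, x.2)) =ᶠ[𝓝 x.1] fun _ => 0 :=
    ((notMem_tsupport_iff_eventuallyEq.1 hx).comp_tendsto
      ((continuous_id.prodMk continuous_const).tendsto' x.1 x rfl))
  rw [partialFst, h.deriv_eq, deriv_const]

theorem partialSnd_eq_zero_of_notMem_tsupport {u : E × ℝ → F} {x : E × ℝ}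
    (hx : x ∉ tsupport u) : partialSnd u x = 0 := by
  have h : (fun r => u (x.1, r)) =ᶠ[𝓝 x.2] fun _ => 0 :=
    ((notMem_tsupport_iff_eventuallyEq.1 hx).comp_tendsto
      ((continuous_const.prodMk continuous_id).tendsto' x.2 x rfl))
  rw [partialSnd, h.deriv_eq, deriv_const]

theorem HasCompactSupport.partialFst {u : ℝ × E → F} (hu : HasCompactSupport u) :
    HasCompactSupport (partialFst u) :=
  hu.mono' fun _ hx => by_contra fun h => hx (partialFst_eq_zero_of_notMem_tsupport h)

theorem HasCompactSupport.partialSnd {u : E × ℝ → F} (hu : HasCompactSupport u) :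
    HasCompactSupport (partialSnd u) :=
  hu.mono' fun _ hx => by_contra fun h => hx (partialSnd_eq_zero_of_notMem_tsupport h)

end Support

section Differentiable

variable [NormedAddCommGroup E] [NormedSpace ℝ E]

theorem hasDerivAt_partialFst {u : ℝ × E → F} (hu : Differentiable ℝ u) (x : ℝ × E) :
    HasDerivAt (fun p => u (p, x.2)) (partialFst u x) x.1 :=
  ((hu _).comp x.1 ((differentiableAt_id).prodMk (differentiableAt_const _))).hasDerivAt

theorem hasDerivAt_partialSnd {u : E × ℝ → F} (hu : Differentiable ℝ u) (x : E × ℝ) :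
    HasDerivAt (fun r => u (x.1, r)) (partialSnd u x) x.2 :=
  ((hu _).comp x.2 ((differentiableAt_const _).prodMk differentiableAt_id)).hasDerivAt

theorem partialFst_eq_fderiv {u : ℝ × E → F} (hu : Differentiable ℝ u) (x : ℝ × E) :
    partialFst u x = fderiv ℝ u x (1, 0) :=
  ((hu x).hasFDerivAt.comp_hasDerivAt x.1
    ((hasDerivAt_id x.1).prodMk (hasDerivAt_const x.1 x.2))).deriv

theorem partialSnd_eq_fderiv {u : E × ℝ → F} (hu : Differentiable ℝ u) (x : E × ℝ) :
    partialSnd u x = fderiv ℝ u x (0, 1) :=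
  ((hu x).hasFDerivAt.comp_hasDerivAt x.2
    ((hasDerivAt_const x.2 x.1).prodMk (hasDerivAt_id x.2))).deriv

theorem ContDiff.partialFst {u : ℝ × E → F} {m n : WithTop ℕ∞} (hu : ContDiff ℝ n u)
    (hmn : m + 1 ≤ n) : ContDiff ℝ m (partialFst u) := by
  have hd : Differentiable ℝ u :=
    hu.differentiable (zero_lt_one.trans_le (le_add_self.trans hmn)).ne'
  rw [funext (partialFst_eq_fderiv hd)]
  exact (hu.fderiv_right hmn).clm_apply contDiff_const

theorem ContDiff.partialSnd {u : E × ℝ → F} {m n : WithTop ℕ∞} (hu : ContDiff ℝ n u)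
    (hmn : m + 1 ≤ n) : ContDiff ℝ m (partialSnd u) := by
  have hd : Differentiable ℝ u :=
    hu.differentiable (zero_lt_one.trans_le (le_add_self.trans hmn)).ne'
  rw [funext (partialSnd_eq_fderiv hd)]
  exact (hu.fderiv_right hmn).clm_apply contDiff_const

end Differentiable

end Partial

section Plane

variable {u : ℝ × ℝ → ℝ}

theorem integrable_mul_partialSnd (hu : ContDiff ℝ 1 u) (hc : HasCompactSupport u)
    {φ : ℝ × ℝ → ℝ} (hφ : Continuous φ) : Integrable fun x => φ x * partialSnd u x :=
  (hφ.mul (hu.partialSnd (m := 0) le_rfl).continuous).integrable_of_hasCompactSupport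
    hc.partialSnd.mul_left

theorem integrable_mul_partialFst (hu : ContDiff ℝ 1 u) (hc : HasCompactSupport u)
    {φ : ℝ × ℝ → ℝ} (hφ : Continuous φ) : Integrable fun x => φ x * partialFst u x :=
  (hφ.mul (hu.partialFst (m := 0) le_rfl).continuous).integrable_of_hasCompactSupport
    hc.partialFst.mul_left

theorem integral_snd_mul_partialSnd (hu : ContDiff ℝ 1 u) (hc : HasCompactSupport u) :
    ∫ x, x.2 * partialSnd u x = -∫ x, u x := by
  have hu' : Continuous (partialSnd u) := (hu.partialSnd (m := 0) le_rfl).continuous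
  have hint := integrable_mul_partialSnd hu hc continuous_snd
  have hslice : ∀ ρ, ∫ R, R * partialSnd u (ρ, R) = -∫ R, u (ρ, R) := fun ρ =>
    integral_id_mul_deriv_of_hasCompactSupport
      (fun R => hasDerivAt_partialSnd (hu.differentiable one_ne_zero) (ρ, R))
      (by fun_prop) (hc.comp_prodMk_left ρ)
  rw [Measure.volume_eq_prod] at hint ⊢
  rw [integral_prod _ hint, integral_prod _ (hu.continuous.integrable_of_hasCompactSupport hc),
    ← integral_neg]
  exact integral_congr_ae (ae_of_all _ hslice)

theorem integral_mul_partialFst_eq_zero (hu : ContDiff ℝ 1 u) (hc : HasCompactSupport u)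
    {φ : ℝ → ℝ} (hφ : Continuous φ) : ∫ x, φ x.2 * partialFst u x = 0 := by
  have hu' : Continuous (partialFst u) := (hu.partialFst (m := 0) le_rfl).continuous
  have hint := integrable_mul_partialFst hu hc (φ := fun x => φ x.2) (by fun_prop)
  have hslice : ∀ R, ∫ ρ, φ R * partialFst u (ρ, R) = 0 := fun R => by
    rw [integral_const_mul, integral_deriv_eq_zero_of_hasCompactSupport
      (fun ρ => hasDerivAt_partialFst (hu.differentiable one_ne_zero) (ρ, R))
      (by fun_prop) (hc.comp_prodMk_right R), mul_zero]
  rw [Measure.volume_eq_prod] at hint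
  rw [Measure.volume_eq_prod, integral_prod_symm _ hint]
  simp only [hslice, integral_zero]

end Plane

theorem HasCompactSupport.contDiff_integral_kernel_mul {G : Type*} [NormedAddCommGroup G]
    [NormedSpace ℝ G] [MeasurableSpace G] [BorelSpace G] {μ : Measure G} [SFinite μ]
    [μ.IsAddLeftInvariant] [μ.IsNegInvariant] {n : ℕ∞} {k g : G → ℝ}
    (hc : HasCompactSupport g) (hk : LocallyIntegrable k μ) (hg : ContDiff ℝ n g) :
    ContDiff ℝ n fun x => ∫ y, k (x - y) * g y ∂μ := by
  have h : (fun x => ∫ y, k (x - y) * g y ∂μ) =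
      convolution k g (ContinuousLinearMap.mul ℝ ℝ) μ :=
    funext fun _ => convolution_mul_swap.symm
  exact h ▸ hc.contDiff_convolution_right _ hk hg

theorem integral_integral_eq_zero_of_antisymm {α : Type*} [MeasurableSpace α] {μ : Measure α}
    [SFinite μ] {Φ : α → α → ℝ} (hΦ : ∀ x y, Φ y x = -Φ x y)
    (hint : Integrable (uncurry Φ) (μ.prod μ)) : ∫ x, ∫ y, Φ x y ∂μ ∂μ = 0 := by
  have hinner : ∀ y, ∫ x, Φ x y ∂μ = -∫ x, Φ y x ∂μ := fun y => by
    rw [← integral_neg]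
    exact integral_congr_ae (ae_of_all _ fun x => hΦ y x)
  have hswap : ∫ x, ∫ y, Φ x y ∂μ ∂μ = -∫ x, ∫ y, Φ x y ∂μ ∂μ :=
    calc ∫ x, ∫ y, Φ x y ∂μ ∂μ = ∫ y, ∫ x, Φ x y ∂μ ∂μ := integral_integral_swap hint
      _ = -∫ x, ∫ y, Φ x y ∂μ ∂μ := by simp only [hinner, integral_neg]
  linarith

theorem eq_of_hasDerivAt_zero_on_Ioo {F : ℝ → ℝ} {a b : ℝ} (hF : ContinuousOn F (Icc a b))
    (hd : ∀ t ∈ Ioo a b, HasDerivAt F 0 t) {s t : ℝ} (hs : s ∈ Icc a b) (ht : t ∈ Icc a b) :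
    F s = F t := by
  wlog hst : s < t generalizing s t
  · rcases (not_lt.1 hst).eq_or_lt with h | h
    · rw [h]
    · exact (this ht hs h).symm
  obtain ⟨c, hc, hslope⟩ := exists_hasDerivAt_eq_slope F (fun _ => 0) hst
    (hF.mono (Icc_subset_Icc hs.1 ht.2))
    (fun x hx => hd x ⟨hs.1.trans_lt hx.1, hx.2.trans_le ht.2⟩)
  rw [eq_comm, div_eq_zero_iff, sub_eq_zero] at hslope
  exact (hslope.resolve_right (sub_ne_zero.2 hst.ne')).symm

theorem hasDerivAt_setIntegral_of_contDiff {E : Type*} [NormedAddCommGroup E]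
    [NormedSpace ℝ E] [MeasurableSpace E] [OpensMeasurableSpace E] {μ : Measure E}
    [IsFiniteMeasureOnCompacts μ] {K : Set E} (hK : IsCompact K) {u : ℝ × E → ℝ}
    (hu : ContDiff ℝ 1 u) (t₀ : ℝ) :
    HasDerivAt (fun t => ∫ x in K, u (t, x) ∂μ) (∫ x in K, partialFst u (t₀, x) ∂μ) t₀ := by
  have hu' : Continuous (partialFst u) := (hu.partialFst (m := 0) le_rfl).continuous
  obtain ⟨C, hC⟩ := ((isCompact_closedBall t₀ 1).prod hK).exists_bound_of_continuousOn
    hu'.continuousOn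
  refine (hasDerivAt_integral_of_dominated_loc_of_deriv_le (bound := fun _ => C)
    (Metric.ball_mem_nhds t₀ one_pos) (Eventually.of_forall fun t => ?_)
    ((hu.continuous.comp (Continuous.prodMk_right t₀)).continuousOn.integrableOn_compact hK)
    (hu'.comp (Continuous.prodMk_right t₀)).aestronglyMeasurable
    ((ae_restrict_iff' hK.measurableSet).2 (ae_of_all _ fun x hx t ht =>
      hC (t, x) ⟨Metric.ball_subset_closedBall ht, hx⟩))
    (integrableOn_const hK.measure_ne_top)
    (ae_of_all _ fun x t _ => hasDerivAt_partialFst (hu.differentiable one_ne_zero) (t, x))).2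
  exact (hu.continuous.comp (Continuous.prodMk_right t)).aestronglyMeasurable

theorem integral_eq_of_integral_partialFst_eq_zero {E : Type*} [NormedAddCommGroup E]
    [NormedSpace ℝ E] [MeasurableSpace E] [OpensMeasurableSpace E] {μ : Measure E}
    [IsFiniteMeasureOnCompacts μ] {K : Set E} (hK : IsCompact K) {u : ℝ × E → ℝ}
    (hu : ContDiff ℝ 1 u) {a b : ℝ} (hsupp : ∀ t ∈ Icc a b, ∀ x ∉ K, u (t, x) = 0)
    (hflux : ∀ t ∈ Ioo a b, ∫ x, partialFst u (t, x) ∂μ = 0) {s t : ℝ} (hs : s ∈ Icc a b)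
    (ht : t ∈ Icc a b) : ∫ x, u (s, x) ∂μ = ∫ x, u (t, x) ∂μ := by
  have hK_eq : ∀ t ∈ Icc a b, ∫ x, u (t, x) ∂μ = ∫ x in K, u (t, x) ∂μ := fun t ht =>
    (setIntegral_eq_integral_of_forall_compl_eq_zero (hsupp t ht)).symm
  have hfluxK : ∀ t ∈ Ioo a b, ∫ x in K, partialFst u (t, x) ∂μ = 0 := fun t ht => by
    rw [setIntegral_eq_integral_of_forall_compl_eq_zero fun x hx => ?_, hflux t ht]
    refine partialFst_eq_zero_of_notMem_tsupport (notMem_tsupport_iff_eventuallyEq.2 ?_)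
    exact eventually_of_mem
      (prod_mem_nhds (isOpen_Ioo.mem_nhds ht) (hK.isClosed.isOpen_compl.mem_nhds hx))
      fun q hq => hsupp q.1 (Ioo_subset_Icc_self hq.1) q.2 hq.2
  rw [hK_eq s hs, hK_eq t ht]
  exact eq_of_hasDerivAt_zero_on_Ioo
    (fun t _ => (hasDerivAt_setIntegral_of_contDiff hK hu t).continuousAt.continuousWithinAt)
    (fun t ht => hfluxK t ht ▸ hasDerivAt_setIntegral_of_contDiff hK hu t) hs ht

section Elo

variable (w b c0 : ℝ → ℝ) (g : ℝ × ℝ → ℝ)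

-- The coefficients `a[g]`, `c[g]`, `d[g]` of the paper and the right-hand side of the equation,
-- for a density `g` of (strength, rating) pairs `(ρ, R)`.

noncomputable def eloRatingDrift (x : ℝ × ℝ) : ℝ :=
  ∫ y, w (x.2 - y.2) * (b (x.1 - y.1) - b (x.2 - y.2)) * g y

noncomputable def eloStrengthDrift (x : ℝ × ℝ) : ℝ :=
  ∫ y, w (x.2 - y.2) * c0 (y.1 - x.1) * g y

noncomputable def eloDiffusion (R : ℝ) : ℝ :=
  ∫ y, w (R - y.2) * g y

noncomputable def eloOperator (σ2 : ℝ) (x : ℝ × ℝ) : ℝ :=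
  -partialSnd (fun y => eloRatingDrift w b g y * g y) x
    - partialFst (fun y => eloStrengthDrift w c0 g y * g y) x
    + σ2 / 2 * eloDiffusion w g x.2 * partialFst (partialFst g) x

variable {w b c0 g}

theorem HasCompactSupport.contDiff_eloRatingDrift {n : ℕ∞} (hc : HasCompactSupport g)
    (hw : Continuous w) (hb : Continuous b) (hg : ContDiff ℝ n g) :
    ContDiff ℝ n (eloRatingDrift w b g) :=
  hc.contDiff_integral_kernel_mul (μ := volume)
    (show Continuous fun z : ℝ × ℝ => w z.2 * (b z.1 - b z.2) by fun_prop).locallyIntegrable hg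

theorem HasCompactSupport.contDiff_eloStrengthDrift {n : ℕ∞} (hc : HasCompactSupport g)
    (hw : Continuous w) (hc0 : Continuous c0) (hg : ContDiff ℝ n g) :
    ContDiff ℝ n (eloStrengthDrift w c0 g) := by
  have h := hc.contDiff_integral_kernel_mul (μ := volume)
    (show Continuous fun z : ℝ × ℝ => w z.2 * c0 (-z.1) by fun_prop).locallyIntegrable hg
  simp only [Prod.fst_sub, Prod.snd_sub, neg_sub] at h
  exact h

theorem HasCompactSupport.continuous_eloDiffusion (hc : HasCompactSupport g)
    (hw : Continuous w) (hg : Continuous g) : Continuous (eloDiffusion w g) :=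
  (hc.contDiff_integral_kernel_mul (n := 0) (μ := volume)
    (hw.comp continuous_snd).locallyIntegrable (contDiff_zero.2 hg)).continuous.comp
    (show Continuous fun R : ℝ => ((0 : ℝ), R) by fun_prop)

theorem integral_eloRatingDrift_mul_self_eq_zero (hw_even : ∀ z, w (-z) = w z)
    (hb_odd : ∀ z, b (-z) = -b z) (hw : Continuous w) (hb : Continuous b) (hg : Continuous g)
    (hc : HasCompactSupport g) : ∫ x, eloRatingDrift w b g x * g x = 0 := by
  set Φ : ℝ × ℝ → ℝ × ℝ → ℝ := fun x y =>
    w (x.2 - y.2) * (b (x.1 - y.1) - b (x.2 - y.2)) * g y * g x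
  have hΦ : ∀ x y, Φ y x = -Φ x y := fun x y => by
    simp only [Φ, ← neg_sub x.2, ← neg_sub x.1, hw_even, hb_odd]
    ring
  have hint : Integrable (uncurry Φ) (volume.prod volume) :=
    Continuous.integrable_of_hasCompactSupport (by fun_prop) <|
      HasCompactSupport.intro (hc.isCompact.prod hc.isCompact) fun p hp => by
        rcases not_and_or.1 (mem_prod.not.1 hp) with h | h <;>
          simp [Φ, uncurry, image_eq_zero_of_notMem_tsupport h]
  rw [← integral_integral_eq_zero_of_antisymm hΦ hint]
  exact integral_congr_ae (ae_of_all _ fun x => (integral_mul_const _ _).symm)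

theorem integral_snd_mul_eloOperator_eq_zero (σ2 : ℝ) (hw_even : ∀ z, w (-z) = w z)
    (hb_odd : ∀ z, b (-z) = -b z) (hw : Continuous w) (hb : Continuous b) (hc0 : Continuous c0)
    (hg : ContDiff ℝ 2 g) (hc : HasCompactSupport g) :
    ∫ x, x.2 * eloOperator w b c0 g σ2 x = 0 := by
  have hg1 : ContDiff ℝ 1 g := hg.of_le one_le_two
  have hA : ContDiff ℝ 1 fun y => eloRatingDrift w b g y * g y :=
    (hc.contDiff_eloRatingDrift hw hb hg1).mul hg1
  have hC : ContDiff ℝ 1 fun y => eloStrengthDrift w c0 g y * g y :=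
    (hc.contDiff_eloStrengthDrift hw hc0 hg1).mul hg1
  have hD : Continuous fun R => R * (σ2 / 2 * eloDiffusion w g R) :=
    continuous_id.mul (continuous_const.mul (hc.continuous_eloDiffusion hw hg.continuous))
  have hiA := integrable_mul_partialSnd hA hc.mul_left continuous_snd
  have hiC := integrable_mul_partialFst hC hc.mul_left continuous_snd
  have hiD := integrable_mul_partialFst (hg.partialFst le_rfl) hc.partialFst
    (φ := fun x => x.2 * (σ2 / 2 * eloDiffusion w g x.2)) (hD.comp continuous_snd)
  have hsplit : (fun x : ℝ × ℝ => x.2 * eloOperator w b c0 g σ2 x) = fun x =>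
      (-(x.2 * partialSnd (fun y => eloRatingDrift w b g y * g y) x)
        - x.2 * partialFst (fun y => eloStrengthDrift w c0 g y * g y) x)
      + x.2 * (σ2 / 2 * eloDiffusion w g x.2) * partialFst (partialFst g) x := by
    ext x
    simp only [eloOperator]
    ring
  rw [hsplit, integral_add (by exact hiA.neg.sub hiC) hiD, integral_sub (by exact hiA.neg) hiC,
    integral_neg,
    integral_snd_mul_partialSnd hA hc.mul_left,
    integral_eloRatingDrift_mul_self_eq_zero hw_even hb_odd hw hb hg.continuous hc,
    integral_mul_partialFst_eq_zero hC hc.mul_left (φ := fun R => R) continuous_id,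
    integral_mul_partialFst_eq_zero (hg.partialFst le_rfl) hc.partialFst hD]
  simp

end Elo

theorem elo_fokker_planck_mean_rating_constant_general
    (σ2 T : ℝ)
    (w b c0 : ℝ → ℝ)
    (hw_even : ∀ z, w (-z) = w z) (hw_smooth : ContDiff ℝ 1 w)
    (hb_odd : ∀ z, b (-z) = -b z) (hb_smooth : ContDiff ℝ 1 b)
    (hc0_smooth : ContDiff ℝ 1 c0)
    (f : ℝ → ℝ → ℝ → ℝ)  -- arguments: ρ, R, t
    (hf_C1 : ContDiff ℝ 1 (fun q : ℝ × ℝ × ℝ => f q.1 q.2.1 q.2.2))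
    (hf_C2 : ∀ t, ContDiff ℝ 2 (fun x : ℝ × ℝ => f x.1 x.2 t))
    (K : Set (ℝ × ℝ)) (hK : IsCompact K)
    (hsupp : ∀ t ∈ Set.Icc (0 : ℝ) T,
      Function.support (fun x : ℝ × ℝ => f x.1 x.2 t) ⊆ K)
    (hpde : ∀ (ρ R t : ℝ), 0 < t → t < T →
      deriv (fun s => f ρ R s) t
        = -(deriv (fun r =>
              (∫ y : ℝ × ℝ, w (r - y.2) * (b (ρ - y.1) - b (r - y.2)) *
                f y.1 y.2 t) * f ρ r t) R)
          - deriv (fun p =>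
              (∫ y : ℝ × ℝ, w (R - y.2) * c0 (y.1 - p) * f y.1 y.2 t) *
                f p R t) ρ
          + σ2 / 2 * (∫ y : ℝ × ℝ, w (R - y.2) * f y.1 y.2 t) *
              deriv (deriv (fun p => f p R t)) ρ) :
    ∀ t1 ∈ Set.Icc (0 : ℝ) T, ∀ t2 ∈ Set.Icc (0 : ℝ) T,
      (∫ x : ℝ × ℝ, x.2 * f x.1 x.2 t1) = ∫ x : ℝ × ℝ, x.2 * f x.1 x.2 t2 := by
  have hvanish : ∀ t ∈ Icc 0 T, ∀ x ∉ K, f x.1 x.2 t = 0 := fun t ht _ hx =>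
    notMem_support.1 fun h => hx (hsupp t ht h)
  set u : ℝ × (ℝ × ℝ) → ℝ := fun q => q.2.2 * f q.2.1 q.2.2 q.1
  have hu : ContDiff ℝ 1 u := contDiff_snd.snd.mul
    (hf_C1.comp (show ContDiff ℝ 1 fun q : ℝ × ℝ × ℝ => (q.2.1, q.2.2, q.1) by fun_prop))
  have hflux : ∀ t ∈ Ioo 0 T, ∫ x, partialFst u (t, x) = 0 := by
    intro t ht
    have hdt : ∀ x,
        partialFst u (t, x) = x.2 * eloOperator w b c0 (fun y => f y.1 y.2 t) σ2 x := fun x => by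
      change deriv (fun s => x.2 * f x.1 x.2 s) t = _
      rw [deriv_const_mul_field']
      exact congrArg _ (hpde x.1 x.2 t ht.1 ht.2)
    simp only [hdt]
    exact integral_snd_mul_eloOperator_eq_zero σ2 hw_even hb_odd hw_smooth.continuous
      hb_smooth.continuous hc0_smooth.continuous (hf_C2 t)
      (HasCompactSupport.intro hK (hvanish t (Ioo_subset_Icc_self ht)))
  intro t1 ht1 t2 ht2
  exact integral_eq_of_integral_partialFst_eq_zero hK hu
    (fun t ht x hx => by simp [u, hvanish t ht x hx]) hflux ht1 ht2

/-- Conservation of the mean rating for classical, compactly supported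
solutions of the nonlinear nonlocal Fokker-Planck Elo equation
`∂ₜ f = -∂_R(a[f] f) - ∂_ρ(c[f] f) + (σ²/2) d[f] ∂²_ρ f`, with rating drift
`a[f]` built from the even kernel `w` and odd score function `b`, strength
drift `c[f]` built from a bounded learning kernel `c₀`, and diffusion
coefficient `(σ²/2) d[f]`. -/
theorem elo_fokker_planck_mean_rating_constant
    (σ2 T : ℝ) (hσ : 0 ≤ σ2) (hT : 0 < T)
    (w b c0 : ℝ → ℝ)
    (hw_even : ∀ z, w (-z) = w z) (hw_smooth : ContDiff ℝ 1 w)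
    (Cw : ℝ) (hw_bdd : ∀ z, |w z| ≤ Cw)
    (hb_odd : ∀ z, b (-z) = -b z) (hb_smooth : ContDiff ℝ 1 b)
    (Cb : ℝ) (hb_bdd : ∀ z, |b z| ≤ Cb)
    (hc0_smooth : ContDiff ℝ 1 c0) (Cc : ℝ) (hc0_bdd : ∀ z, |c0 z| ≤ Cc)
    (f : ℝ → ℝ → ℝ → ℝ)  -- arguments: ρ, R, t
    (hf_nonneg : ∀ ρ R t, 0 ≤ f ρ R t)
    (hf_C1 : ContDiff ℝ 1 (fun q : ℝ × ℝ × ℝ => f q.1 q.2.1 q.2.2))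
    (hf_C2 : ∀ t, ContDiff ℝ 2 (fun x : ℝ × ℝ => f x.1 x.2 t))
    (K : Set (ℝ × ℝ)) (hK : IsCompact K)
    (hsupp : ∀ t ∈ Set.Icc (0 : ℝ) T,
      Function.support (fun x : ℝ × ℝ => f x.1 x.2 t) ⊆ K)
    (hpde : ∀ (ρ R t : ℝ), 0 < t → t < T →
      deriv (fun s => f ρ R s) t
        = -(deriv (fun r =>
              (∫ y : ℝ × ℝ, w (r - y.2) * (b (ρ - y.1) - b (r - y.2)) *
                f y.1 y.2 t) * f ρ r t) R)
          - deriv (fun p =>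
              (∫ y : ℝ × ℝ, w (R - y.2) * c0 (y.1 - p) * f y.1 y.2 t) *
                f p R t) ρ
          + σ2 / 2 * (∫ y : ℝ × ℝ, w (R - y.2) * f y.1 y.2 t) *
              deriv (deriv (fun p => f p R t)) ρ) :
    ∀ t1 ∈ Set.Icc (0 : ℝ) T, ∀ t2 ∈ Set.Icc (0 : ℝ) T,
      (∫ x : ℝ × ℝ, x.2 * f x.1 x.2 t1) = ∫ x : ℝ × ℝ, x.2 * f x.1 x.2 t2 :=
  elo_fokker_planck_mean_rating_constant_general σ2 T w b c0 hw_even hw_smooth hb_odd hb_smooth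
    hc0_smooth f hf_C1 hf_C2 K hK hsupp hpde
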